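/- Let G be a matching covered graph, ∂(X) a cut of G of even matching porosity, ∂(Z) a non-trivial tight cut of G, and let v_Z be the contraction vertex obtained by contracting Z into the graph G_Z. If |X ∩ Z| is odd, then the matching porosity in G_Z of the cut with shore (X∖Z) ∪ {v_Z} is at most the matching porosity of ∂(X) in G. -/

import Mathlib

open SimpleGraph

/-- A graph is matching covered if it is connected and every edge lies in a
perfect matching. -/
def MatchingCovered {V : Type*} (G : SimpleGraph V) : Prop :=
  G.Connected ∧ ∀ e ∈ G.edgeSet, ∃ M : G.Subgraph, M.IsPerfectMatching ∧ e ∈ M.edgeSet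

/-- The edge cut `∂(X)`: all edges of `G` with exactly one endpoint in `X`. -/
def cutEdges {V : Type*} (G : SimpleGraph V) (X : Set V) : Set (Sym2 V) :=
  {e | e ∈ G.edgeSet ∧ ∃ u v, e = s(u, v) ∧ u ∈ X ∧ v ∉ X}

/-- The matching porosity of the cut `∂(X)`: the maximum number of edges of a
perfect matching of `G` crossing the cut. -/
noncomputable def matchingPorosity {V : Type*} (G : SimpleGraph V) (X : Set V) : ℕ :=
  sSup {n | ∃ M : G.Subgraph, M.IsPerfectMatching ∧ n = (M.edgeSet ∩ cutEdges G X).ncard}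

/-- A cut is tight if every perfect matching contains exactly one of its edges. -/
def IsTightCut {V : Type*} (G : SimpleGraph V) (X : Set V) : Prop :=
  ∀ M : G.Subgraph, M.IsPerfectMatching → (M.edgeSet ∩ cutEdges G X).ncard = 1

/-- A tight cut is non-trivial if both shores have at least two vertices. -/
def IsNontrivialTightCut {V : Type*} (G : SimpleGraph V) (X : Set V) : Prop :=
  IsTightCut G X ∧ 2 ≤ X.ncard ∧ 2 ≤ Xᶜ.ncard

/-- `A`, `B` form a bipartition of `G` into its two colour classes. -/
def IsBipartitionOf {V : Type*} (G : SimpleGraph V) (A B : Set V) : Prop :=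
  A ∪ B = Set.univ ∧ Disjoint A B ∧
    ∀ ⦃u v⦄, G.Adj u v → (u ∈ A ∧ v ∈ B) ∨ (u ∈ B ∧ v ∈ A)

/-- A brace with colour classes `A` and `B`: a bipartite matching covered graph
without non-trivial tight cuts. -/
def IsBraceWith {V : Type*} (G : SimpleGraph V) (A B : Set V) : Prop :=
  MatchingCovered G ∧ IsBipartitionOf G A B ∧ ∀ X : Set V, ¬ IsNontrivialTightCut G X

instance optionFinite {α : Type*} [Finite α] : Finite (Option α) := by
  have := Fintype.ofFinite α
  infer_instance

/-- The tight cut contraction: identify the shore `Z` into a single contraction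
vertex (represented by `none`) and delete parallel edges and loops. -/
def contractShore {V : Type*} (G : SimpleGraph V) (Z : Set V) :
    SimpleGraph (Option {v : V // v ∉ Z}) :=
  SimpleGraph.fromRel fun a b =>
    match a, b with
    | some u, some w => G.Adj u w
    | some u, none => ∃ z ∈ Z, G.Adj u z
    | _, _ => False

/-!
Let `M'` be a perfect matching of `G_Z` and `u` the partner of `v_Z`. As `G` is matching
covered, some perfect matching `M₀` of `G` contains an edge `uz` with `z ∈ Z`; by tightness it is
the only edge of `M₀` in `∂(Z)`, so `M'` away from `Z` together with `M₀` at `Z` is a perfect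
matching `M` of `G`. Every edge of `M'` in the contracted cut other than `v_Z u` is an edge of `M`
in `∂(X)`, whence `|M' ∩ ∂(X')| ≤ |M ∩ ∂(X)| + 1`. A perfect matching meets a cut `∂(Y)` in a
number of edges of the parity of `|Y|`. Here `|X| ≡ mp(∂(X))` is even and `|X ∩ Z|` odd, so
`|X'| = |X ∖ Z| + 1` is even too, both sides are even and the `+ 1` can be dropped.
-/

section Matching

variable {V : Type*} {G : SimpleGraph V}

lemma mem_cutEdges_iff {X : Set V} {a b : V} :
    s(a, b) ∈ cutEdges G X ↔ G.Adj a b ∧ (a ∈ X ∧ b ∉ X ∨ b ∈ X ∧ a ∉ X) := by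
  constructor
  · rintro ⟨he, u, v, huv, hu, hv⟩
    rcases Sym2.eq_iff.1 huv with ⟨rfl, rfl⟩ | ⟨rfl, rfl⟩
    exacts [⟨he, .inl ⟨hu, hv⟩⟩, ⟨he, .inr ⟨hu, hv⟩⟩]
  · rintro ⟨hadj, ⟨ha, hb⟩ | ⟨hb, ha⟩⟩
    · exact ⟨hadj, a, b, rfl, ha, hb⟩
    · exact ⟨hadj, b, a, Sym2.eq_swap, hb, ha⟩

namespace SimpleGraph.Subgraph

lemma IsMatching.even_ncard_verts [Finite V] {M : G.Subgraph} (hM : M.IsMatching) :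
    Even M.verts.ncard := by
  classical
  have := Fintype.ofFinite M.verts
  rw [Set.ncard_eq_toFinset_card']
  exact hM.even_card

/-- The vertices of `X` matched inside `X` are paired up by `M`, and those matched outside `X`
correspond to the edges of `M` in `∂(X)`. -/
lemma IsPerfectMatching.ncard_inter_cutEdges_mod_two [Finite V] {M : G.Subgraph}
    (hM : M.IsPerfectMatching) (X : Set V) :
    (M.edgeSet ∩ cutEdges G X).ncard % 2 = X.ncard % 2 := by
  choose p hp using fun v => (hM.1 (hM.2 v)).exists
  have hpp (v : V) : p (p v) = v := hM.1.eq_of_adj_left (hp (p v)) (hp v).symm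
  set A := X \ p ⁻¹' X
  set B := X ∩ p ⁻¹' X
  have hA : A.ncard = (M.edgeSet ∩ cutEdges G X).ncard := by
    have hinj : A.InjOn fun v => s(v, p v) := by
      rintro v ⟨hvX, -⟩ w ⟨-, hpw⟩ h
      rcases Sym2.eq_iff.1 h with ⟨h, -⟩ | ⟨h, -⟩
      exacts [h, (hpw (show p w ∈ X from h ▸ hvX)).elim]
    rw [← hinj.ncard_image]
    congr 1
    ext e
    constructor
    · rintro ⟨v, ⟨hvX, hpvX⟩, rfl⟩
      exact ⟨hp v, mem_cutEdges_iff.2 ⟨M.adj_sub (hp v), .inl ⟨hvX, hpvX⟩⟩⟩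
    · rintro ⟨he, -, u, v, rfl, hu, hv⟩
      obtain rfl := hM.1.eq_of_adj_left (hp u) he
      exact ⟨u, ⟨hu, hv⟩, rfl⟩
  have hB : Even B.ncard := by
    have : (M.induce B).IsMatching := by
      rintro v ⟨hvX, hpvX⟩
      have hppvX : p (p v) ∈ X := (hpp v).symm ▸ hvX
      exact ⟨p v, ⟨⟨hvX, hpvX⟩, ⟨hpvX, hppvX⟩, hp v⟩, fun w hw => hM.1.eq_of_adj_left hw.2.2 (hp v)⟩
    exact this.even_ncard_verts
  have hX : B.ncard + A.ncard = X.ncard := Set.ncard_inter_add_ncard_sdiff_eq_ncard X _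
  obtain ⟨k, hk⟩ := hB
  omega

end SimpleGraph.Subgraph

lemma matchingPorosity_le {X : Set V} {n : ℕ}
    (h : ∀ M : G.Subgraph, M.IsPerfectMatching → (M.edgeSet ∩ cutEdges G X).ncard ≤ n) :
    matchingPorosity G X ≤ n :=
  csSup_le' <| by rintro _ ⟨M, hM, rfl⟩; exact h M hM

section Finite

variable [Finite V] {M : G.Subgraph}

lemma bddAbove_ncard_inter_cutEdges (X : Set V) :
    BddAbove {n | ∃ M : G.Subgraph, M.IsPerfectMatching ∧ n = (M.edgeSet ∩ cutEdges G X).ncard} :=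
  ⟨Nat.card (Sym2 V), by rintro _ ⟨M, -, rfl⟩; exact Set.ncard_le_card _⟩

lemma le_matchingPorosity (hM : M.IsPerfectMatching) (X : Set V) :
    (M.edgeSet ∩ cutEdges G X).ncard ≤ matchingPorosity G X :=
  le_csSup (bddAbove_ncard_inter_cutEdges X) ⟨M, hM, rfl⟩

lemma matchingPorosity_mod_two (hM : M.IsPerfectMatching) (X : Set V) :
    matchingPorosity G X % 2 = X.ncard % 2 := by
  obtain ⟨M₁, hM₁, hmax⟩ : matchingPorosity G X ∈ {n | ∃ M : G.Subgraph, M.IsPerfectMatching ∧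
      n = (M.edgeSet ∩ cutEdges G X).ncard} :=
    Nat.sSup_mem ⟨_, M, hM, rfl⟩ (bddAbove_ncard_inter_cutEdges X)
  rw [hmax, hM₁.ncard_inter_cutEdges_mod_two]

end Finite

end Matching

section Contraction

variable {V : Type*} {G : SimpleGraph V} {Z : Set V}

/-- The shore `(X ∖ Z) ∪ {v_Z}` in `G_Z`. -/
def contractedShore (Z X : Set V) : Set (Option {v // v ∉ Z}) :=
  {a | a = none ∨ ∃ u : {v // v ∉ Z}, a = some u ∧ u.1 ∈ X}

lemma ncard_contractedShore [Finite V] (Z X : Set V) :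
    (contractedShore Z X).ncard = (X \ Z).ncard + 1 := by
  have : contractedShore Z X = insert none (some '' {u : {v // v ∉ Z} | u.1 ∈ X}) := by
    ext (_ | ⟨u, hu⟩)
    · simp [contractedShore]
    · simp [contractedShore, hu]
  rw [this, Set.ncard_insert_of_notMem (by simp),
    Set.ncard_image_of_injective _ (Option.some_injective _), Set.ncard_subtype, Set.sdiff_eq]
  rfl

lemma contractShore_adj_some_some {u w : {v // v ∉ Z}} :
    (contractShore G Z).Adj (some u) (some w) ↔ G.Adj u.1 w.1 := by
  simp only [contractShore, fromRel_adj]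
  constructor
  · rintro ⟨-, h | h⟩
    exacts [h, h.symm]
  · exact fun h => ⟨fun h' => h.ne (congrArg Subtype.val (Option.some_injective _ h')), .inl h⟩

lemma contractShore_adj_none_some {u : {v // v ∉ Z}} :
    (contractShore G Z).Adj none (some u) ↔ ∃ z ∈ Z, G.Adj u.1 z := by
  simp only [contractShore, fromRel_adj]
  constructor
  · rintro ⟨-, h | h⟩
    exacts [h.elim, h]
  · exact fun h => ⟨by simp, .inr h⟩

open Classical in
noncomputable def contractVertex (Z : Set V) (v : V) : Option {v // v ∉ Z} :=
  if h : v ∈ Z then none else some ⟨v, h⟩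

lemma contractVertex_val (u : {v // v ∉ Z}) : contractVertex Z u.1 = some u := by
  simp [contractVertex, u.2]

lemma IsTightCut.eq_of_adj {M : G.Subgraph} (hZ : IsTightCut G Z) (hM : M.IsPerfectMatching)
    {u z a b : V} (hu : u ∉ Z) (hz : z ∈ Z) (huz : M.Adj u z) (ha : a ∉ Z) (hb : b ∈ Z)
    (hab : M.Adj a b) : a = u := by
  obtain ⟨e, he⟩ := Set.ncard_eq_one.1 (hZ M hM)
  have mem {x y : V} (hx : x ∉ Z) (hy : y ∈ Z) (hxy : M.Adj x y) : s(x, y) = e :=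
    (Set.ext_iff.1 he _).1 ⟨hxy, mem_cutEdges_iff.2 ⟨M.adj_sub hxy, .inr ⟨hy, hx⟩⟩⟩
  rcases Sym2.eq_iff.1 ((mem ha hb hab).trans (mem hu hz huz).symm) with ⟨h, -⟩ | ⟨h, -⟩
  exacts [h, absurd (h ▸ hz) ha]

def liftMatching (M₀ : G.Subgraph) (M' : (contractShore G Z).Subgraph) : G.Subgraph where
  verts := Set.univ
  Adj a b := (a ∈ Z ∨ b ∈ Z) ∧ M₀.Adj a b ∨
    ∃ (ha : a ∉ Z) (hb : b ∉ Z), M'.Adj (some ⟨a, ha⟩) (some ⟨b, hb⟩)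
  adj_sub := by
    rintro a b (⟨-, h⟩ | ⟨_, _, h⟩)
    exacts [M₀.adj_sub h, contractShore_adj_some_some.1 (M'.adj_sub h)]
  edge_vert _ := Set.mem_univ _
  symm := by
    constructor
    rintro a b (⟨hab, h⟩ | ⟨ha, hb, h⟩)
    exacts [.inl ⟨hab.symm, h.symm⟩, .inr ⟨hb, ha, h.symm⟩]

lemma isPerfectMatching_liftMatching {M₀ : G.Subgraph} {M' : (contractShore G Z).Subgraph}
    (hM₀ : M₀.IsPerfectMatching) (hM' : M'.IsPerfectMatching) {u : {v // v ∉ Z}} {z : V}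
    (hz : z ∈ Z) (huz : M₀.Adj u z) (hu : M'.Adj none (some u))
    (hcross : ∀ a b, a ∉ Z → b ∈ Z → M₀.Adj a b → a = u) :
    (liftMatching M₀ M').IsPerfectMatching := by
  rw [Subgraph.isPerfectMatching_iff]
  intro v
  by_cases hv : v ∈ Z
  · obtain ⟨w, hw, hw_uniq⟩ := hM₀.1 (hM₀.2 v)
    refine ⟨w, .inl ⟨.inl hv, hw⟩, ?_⟩
    rintro y (⟨-, hy⟩ | ⟨hv', -, -⟩)
    exacts [hw_uniq y hy, absurd hv hv']
  obtain ⟨_ | w, hw, hw_uniq⟩ := hM'.1 (hM'.2 (some ⟨v, hv⟩))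
  · obtain rfl : u = ⟨v, hv⟩ := Option.some_injective _ (hM'.1.eq_of_adj_left hu hw.symm)
    refine ⟨z, .inl ⟨.inr hz, huz⟩, ?_⟩
    rintro y (⟨-, hy⟩ | ⟨_, hy', hy⟩)
    · exact hM₀.1.eq_of_adj_left hy huz
    · cases hw_uniq _ hy
  · refine ⟨w.1, .inr ⟨hv, w.2, hw⟩, ?_⟩
    rintro y (⟨hvy, hy⟩ | ⟨_, hy', hy⟩)
    · obtain rfl : ⟨v, hv⟩ = u := Subtype.ext (hcross v y hv (hvy.resolve_left hv) hy)
      cases hM'.1.eq_of_adj_left hw hu.symm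
    · exact congrArg Subtype.val (Option.some_injective _ (hw_uniq _ hy))

lemma ncard_inter_cutEdges_contractShore_le [Finite V] (M₀ : G.Subgraph)
    {M' : (contractShore G Z).Subgraph} (hM' : M'.IsMatching) {u : {v // v ∉ Z}}
    (hu : M'.Adj none (some u)) (X : Set V) :
    (M'.edgeSet ∩ cutEdges (contractShore G Z) (contractedShore Z X)).ncard ≤
      ((liftMatching M₀ M').edgeSet ∩ cutEdges G X).ncard + 1 := by
  set C' := M'.edgeSet ∩ cutEdges (contractShore G Z) (contractedShore Z X)
  set e₀ : Sym2 (Option {v // v ∉ Z}) := s(none, some u)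
  have hsub : C' \ {e₀} ⊆
      Sym2.map (contractVertex Z) '' ((liftMatching M₀ M').edgeSet ∩ cutEdges G X) := by
    rintro _ ⟨⟨he, -, a, _ | b, rfl, ha, hb⟩, hne⟩
    · exact absurd (.inl rfl) hb
    have hbX : b.1 ∉ X := fun h => hb (.inr ⟨b, rfl, h⟩)
    rcases ha with rfl | ⟨a, rfl, haX⟩
    · obtain rfl := Option.some_injective _ (hM'.eq_of_adj_left hu he)
      exact absurd rfl hne
    have hab : (liftMatching M₀ M').Adj a.1 b.1 := .inr ⟨a.2, b.2, he⟩
    refine ⟨s(a.1, b.1), ⟨hab, mem_cutEdges_iff.2 ⟨hab.adj_sub, .inl ⟨haX, hbX⟩⟩⟩, ?_⟩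
    simp [contractVertex_val]
  calc C'.ncard ≤ (C' \ {e₀}).ncard + ({e₀} : Set _).ncard :=
        Set.ncard_le_ncard_sdiff_add_ncard _ _
    _ ≤ _ := by
      rw [Set.ncard_singleton]
      gcongr
      exact (Set.ncard_le_ncard hsub).trans Set.ncard_image_le

end Contraction

/-- If `∂(X)` has even matching porosity, `∂(Z)` is a non-trivial tight cut and
`|X ∩ Z|` is odd, then in the tight cut contraction `G_Z` the cut with shore
`(X∖Z) ∪ {v_Z}` has matching porosity at most that of `∂(X)` in `G`. -/
theorem contraction_porosity_le {V : Type*} [Finite V] (G : SimpleGraph V)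
    (hG : MatchingCovered G) (X Z : Set V)
    (hX : Even (matchingPorosity G X)) (hZ : IsNontrivialTightCut G Z)
    (hodd : Odd (X ∩ Z).ncard) :
    matchingPorosity (contractShore G Z)
        {a : Option {v : V // v ∉ Z} | a = none ∨ ∃ u : {v : V // v ∉ Z}, a = some u ∧ u.1 ∈ X}
      ≤ matchingPorosity G X := by
  show matchingPorosity (contractShore G Z) (contractedShore Z X) ≤ _
  refine matchingPorosity_le fun M' hM' => ?_
  obtain ⟨_ | u, hu, -⟩ := hM'.1 (hM'.2 none)
  · exact ((M'.adj_sub hu).ne rfl).elim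
  obtain ⟨z, hz, huz⟩ := contractShore_adj_none_some.1 (M'.adj_sub hu)
  obtain ⟨M₀, hM₀, huzM₀⟩ := hG.2 s(u.1, z) huz
  have hM := isPerfectMatching_liftMatching hM₀ hM' hz huzM₀ hu
    fun a b ha hb hab => hZ.1.eq_of_adj hM₀ u.2 hz huzM₀ ha hb hab
  have hcut := ncard_inter_cutEdges_contractShore_le M₀ hM'.1 hu X
  have hmax := le_matchingPorosity hM X
  have hpar' := hM'.ncard_inter_cutEdges_mod_two (contractedShore Z X)
  rw [ncard_contractedShore] at hpar'
  have hpar := hM.ncard_inter_cutEdges_mod_two X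
  have hporo := matchingPorosity_mod_two hM X
  have hsplit := Set.ncard_inter_add_ncard_sdiff_eq_ncard X Z
  obtain ⟨k, hk⟩ := hX
  obtain ⟨l, hl⟩ := hodd
  omega
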